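/- Let f ∈ L¹(ℝ³) ∩ L∞(ℝ³) be nonnegative with w > 0 satisfying w·∫_{ℝ³} f dR < 1, and define G = w² f + 𝓕⁻¹[ w³·(𝓕f)² / (1 − w·𝓕f) ]. If G(R) ≥ 0 for almost every R ∈ ℝ³, then G is integrable on ℝ³ and ∫_{ℝ³} G dR = w²·(∫_{ℝ³} f dR) / (1 − w·∫_{ℝ³} f dR). -/

import Mathlib

/-!
Write `g = w³(𝓕f)²/(1 − w𝓕f)`, so that `G = w²f + Re 𝓕⁻g`. Since `f ∈ L¹ ∩ L∞`, `|𝓕f|²` is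
integrable: by Parseval, its integral against a Gaussian is the integral of the autocorrelation
of `f` against the Fourier transform of that Gaussian, a probability density, hence is at most
`‖f‖∞ ‖f‖₁`. As `|1 − w𝓕f| ≥ 1 − w∫f > 0`, the
symbol `g` is then integrable and continuous, and integrating `G` against `exp(-‖v‖²/c)` gives
`w²∫f + g(0)` in the limit `c → ∞`. Because `G ≥ 0`, Fatou's lemma turns this into integrability
of `G`, and dominated convergence identifies `∫G` with `w²∫f + w³(∫f)²/(1 − w∫f)`.
-/

open MeasureTheory Filter Real Complex
open scoped FourierTransform Topology Convolution ENNReal ComplexConjugate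

lemma tendsto_rexp_neg_inv_mul (r : ℝ) :
    Tendsto (fun c : ℝ ↦ rexp (-c⁻¹ * r)) atTop (𝓝 1) := by
  simpa using (tendsto_inv_atTop_zero.neg.mul_const r).rexp

lemma norm_rexp_sq_mul_le {E : Type*} [SeminormedAddCommGroup E] {c : ℝ} (hc : 0 ≤ c)
    (u : E → ℝ) (v : E) :
    ‖rexp (-c⁻¹ * ‖v‖ ^ 2) * u v‖ ≤ ‖u v‖ := by
  rw [norm_mul, Real.norm_of_nonneg (exp_nonneg _)]
  refine mul_le_of_le_one_left (norm_nonneg _) (exp_le_one_iff.2 ?_)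
  have : 0 ≤ c⁻¹ * ‖v‖ ^ 2 := by positivity
  linarith

lemma one_sub_le_norm_one_sub_mul {w z : ℂ} {r : ℝ} (h : ‖w * z‖ ≤ r) :
    1 - r ≤ ‖1 - w * z‖ := by
  have := norm_sub_norm_le (1 : ℂ) (w * z)
  rw [norm_one] at this
  linarith

lemma integrable_sq_div_one_sub {α : Type*} [MeasurableSpace α] {μ : Measure α} {z : α → ℂ}
    (hz : AEStronglyMeasurable z μ) (hz2 : Integrable (fun x ↦ ‖z x‖ ^ 2) μ) {w : ℂ} {r : ℝ}
    (hr : r < 1) (hwz : ∀ x, ‖w * z x‖ ≤ r) :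
    Integrable (fun x ↦ z x ^ 2 / (1 - w * z x)) μ := by
  have hmeas : AEStronglyMeasurable (fun x ↦ z x ^ 2 / (1 - w * z x)) μ := by
    have := hz.aemeasurable
    exact (by fun_prop : AEMeasurable (fun x ↦ z x ^ 2 / (1 - w * z x)) μ).aestronglyMeasurable
  refine (hz2.div_const (1 - r)).mono' hmeas (.of_forall fun x ↦ ?_)
  rw [norm_div, norm_pow]
  exact div_le_div_of_nonneg_left (by positivity) (by linarith)
    (one_sub_le_norm_one_sub_mul (hwz x))

lemma continuous_sq_div_one_sub {X : Type*} [TopologicalSpace X] {z : X → ℂ} (hz : Continuous z)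
    {w : ℂ} {r : ℝ} (hr : r < 1) (hwz : ∀ x, ‖w * z x‖ ≤ r) :
    Continuous (fun x ↦ z x ^ 2 / (1 - w * z x)) :=
  (hz.pow 2).div (by fun_prop) fun x ↦
    norm_pos_iff.1 (by linarith [one_sub_le_norm_one_sub_mul (hwz x)])

variable {V : Type*} [NormedAddCommGroup V] [InnerProductSpace ℝ V] [FiniteDimensional ℝ V]
  [MeasurableSpace V] [BorelSpace V]

lemma integrable_cexp_neg_mul_sq_norm {b : ℂ} (hb : 0 < b.re) :
    Integrable (fun v : V ↦ cexp (-b * ‖v‖ ^ 2)) := by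
  simpa using GaussianFourier.integrable_cexp_neg_mul_sq_norm_add (V := V) hb 0 0

lemma integrable_rexp_neg_mul_sq_norm {b : ℝ} (hb : 0 < b) :
    Integrable (fun v : V ↦ rexp (-b * ‖v‖ ^ 2)) := by
  simpa [← ofReal_pow, ← ofReal_neg, ← ofReal_mul, ← ofReal_exp] using
    (integrable_cexp_neg_mul_sq_norm (V := V) (b := b) (by simpa)).re

lemma integrable_rexp_sq_mul {u : V → ℝ} (hu : Integrable u) {c : ℝ} (hc : 0 ≤ c) :
    Integrable (fun v ↦ rexp (-c⁻¹ * ‖v‖ ^ 2) * u v) :=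
  hu.norm.mono' ((Continuous.aestronglyMeasurable (by fun_prop)).mul hu.1)
    (.of_forall (norm_rexp_sq_mul_le hc u))

lemma tendsto_integral_rexp_sq_mul {u : V → ℝ} (hu : Integrable u) :
    Tendsto (fun c : ℝ ↦ ∫ v, rexp (-c⁻¹ * ‖v‖ ^ 2) * u v) atTop (𝓝 (∫ v, u v)) := by
  refine tendsto_integral_filter_of_dominated_convergence _ (.of_forall fun c ↦
    (Continuous.aestronglyMeasurable (by fun_prop)).mul hu.1) ?_ hu.norm
    (.of_forall fun v ↦ by simpa using (tendsto_rexp_neg_inv_mul (‖v‖ ^ 2)).mul_const (u v))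
  filter_upwards [Ici_mem_atTop (0 : ℝ)] with c (hc : 0 ≤ c)
  exact .of_forall (norm_rexp_sq_mul_le hc u)

lemma integrable_of_integral_rexp_sq_mul_le {φ : V → ℝ} (hφm : AEStronglyMeasurable φ)
    (hφ : 0 ≤ᵐ[volume] φ) {C : ℝ}
    (hC : ∀ᶠ c in atTop, Integrable (fun v ↦ rexp (-c⁻¹ * ‖v‖ ^ 2) * φ v) ∧
      ∫ v, rexp (-c⁻¹ * ‖v‖ ^ 2) * φ v ≤ C) :
    Integrable φ := by
  refine ⟨hφm, (hasFiniteIntegral_iff_ofReal hφ).2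
    ((?_ : _ ≤ ENNReal.ofReal C).trans_lt ENNReal.ofReal_lt_top)⟩
  set F : ℕ → V → ℝ≥0∞ := fun n v ↦ ENNReal.ofReal (rexp (-(n : ℝ)⁻¹ * ‖v‖ ^ 2) * φ v)
  have hF : ∀ v, Tendsto (F · v) atTop (𝓝 (ENNReal.ofReal (φ v))) := fun v ↦
    (ENNReal.continuous_ofReal.tendsto _).comp <| by
      simpa using ((tendsto_rexp_neg_inv_mul (‖v‖ ^ 2)).comp
        tendsto_natCast_atTop_atTop).mul_const (φ v)
  calc ∫⁻ v, ENNReal.ofReal (φ v) = ∫⁻ v, liminf (F · v) atTop :=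
        lintegral_congr fun v ↦ (hF v).liminf_eq.symm
    _ ≤ liminf (fun n ↦ ∫⁻ v, F n v) atTop := lintegral_liminf_le' fun n ↦
        ((Continuous.aemeasurable (by fun_prop)).mul hφm.aemeasurable).ennreal_ofReal
    _ ≤ ENNReal.ofReal C := by
        refine liminf_le_of_frequently_le' (Eventually.frequently ?_)
        filter_upwards [tendsto_natCast_atTop_atTop.eventually hC] with n ⟨hint, hle⟩
        rw [← ofReal_integral_eq_lintegral_ofReal hint]
        · exact ENNReal.ofReal_le_ofReal hle
        · filter_upwards [hφ] with v hv using mul_nonneg (exp_nonneg _) hv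

lemma integrable_and_integral_eq_of_tendsto_integral_rexp_sq_mul {φ : V → ℝ}
    (hφm : AEStronglyMeasurable φ) (hφ : 0 ≤ᵐ[volume] φ)
    (hint : ∀ᶠ c in atTop, Integrable (fun v ↦ rexp (-c⁻¹ * ‖v‖ ^ 2) * φ v)) {L : ℝ}
    (hL : Tendsto (fun c : ℝ ↦ ∫ v, rexp (-c⁻¹ * ‖v‖ ^ 2) * φ v) atTop (𝓝 L)) :
    Integrable φ ∧ ∫ v, φ v = L := by
  have hφi : Integrable φ := integrable_of_integral_rexp_sq_mul_le hφm hφ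
    (hint.and (hL.eventually (eventually_le_nhds (lt_add_one L))))
  exact ⟨hφi, tendsto_nhds_unique (tendsto_integral_rexp_sq_mul hφi) hL⟩

lemma MeasureTheory.Integrable.continuous_fourier {u : V → ℂ} (hu : Integrable u) :
    Continuous (𝓕 u) :=
  VectorFourier.fourierIntegral_continuous continuous_fourierChar (by exact continuous_inner) hu

lemma MeasureTheory.Integrable.continuous_fourierInv {u : V → ℂ} (hu : Integrable u) :
    Continuous (𝓕⁻ u) := by
  rw [Real.fourierInv_eq_fourier_comp_neg]
  exact hu.comp_neg.continuous_fourier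

lemma norm_fourier_le_integral_norm (u : V → ℂ) (ξ : V) : ‖𝓕 u ξ‖ ≤ ∫ x, ‖u x‖ :=
  VectorFourier.norm_fourierIntegral_le_integral_norm _ _ _ _ _

lemma norm_fourierInv_le_integral_norm (u : V → ℂ) (x : V) : ‖𝓕⁻ u x‖ ≤ ∫ ξ, ‖u ξ‖ := by
  rw [Real.fourierInv_eq_fourier_neg]
  exact norm_fourier_le_integral_norm u (-x)

lemma norm_fourier_ofReal_le_integral {f : V → ℝ} (hf : 0 ≤ᵐ[volume] f) (ξ : V) :
    ‖𝓕 (fun x ↦ (f x : ℂ)) ξ‖ ≤ ∫ x, f x :=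
  (norm_fourier_le_integral_norm _ ξ).trans_eq <| integral_congr_ae <| by
    filter_upwards [hf] with x hx using by simp [abs_of_nonneg hx]

lemma fourier_ofReal_zero (f : V → ℝ) : 𝓕 (fun x ↦ (f x : ℂ)) 0 = ∫ x, f x := by
  simp [Real.fourier_eq, integral_complex_ofReal]

lemma integral_fourier_mul_eq_of_integrable {u v : V → ℂ} (hu : Integrable u)
    (hv : Integrable v) :
    ∫ ξ, 𝓕 u ξ * v ξ = ∫ x, u x * 𝓕 v x := by
  simpa using! VectorFourier.integral_fourierIntegral_smul_eq_flip (L := innerₗ V)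
    continuous_fourierChar continuous_inner hu hv

lemma fourier_conj_comp_neg (u : V → ℂ) (ξ : V) :
    𝓕 (fun x ↦ conj (u (-x))) ξ = conj (𝓕 u ξ) := by
  rw [← congrFun (Real.fourierInv_eq_fourier_comp_neg fun x ↦ conj (u x)) ξ,
    Real.fourierInv_eq, Real.fourier_eq, ← integral_conj]
  congr with v
  simp [Circle.smul_def, ← Circle.coe_inv_eq_conj, AddChar.map_neg_eq_inv]

lemma norm_fourier_cexp_neg_mul_sq_norm {b : ℝ} (hb : 0 < b) (ξ : V) :
    ‖𝓕 (fun v : V ↦ cexp (-b * ‖v‖ ^ 2)) ξ‖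
      = (π / b) ^ (Module.finrank ℝ V / 2 : ℝ) * rexp (-(π ^ 2 / b) * ‖ξ‖ ^ 2) := by
  rw [fourier_gaussian_innerProductSpace (by simpa using hb), norm_mul,
    show (π / b : ℂ) = ((π / b : ℝ) : ℂ) by push_cast; rfl,
    norm_cpow_eq_rpow_re_of_pos (by positivity), show -(π : ℂ) ^ 2 * ‖ξ‖ ^ 2 / b
      = ((-(π ^ 2 / b) * ‖ξ‖ ^ 2 : ℝ) : ℂ) by push_cast; ring, norm_exp_ofReal]
  congr 2
  norm_num

lemma integrable_norm_fourier_cexp_neg_mul_sq_norm {b : ℝ} (hb : 0 < b) :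
    Integrable (fun ξ : V ↦ ‖𝓕 (fun v : V ↦ cexp (-b * ‖v‖ ^ 2)) ξ‖) := by
  simp_rw [norm_fourier_cexp_neg_mul_sq_norm hb]
  exact (integrable_rexp_neg_mul_sq_norm (by positivity)).const_mul _

lemma integral_norm_fourier_cexp_neg_mul_sq_norm {b : ℝ} (hb : 0 < b) :
    ∫ ξ : V, ‖𝓕 (fun v : V ↦ cexp (-b * ‖v‖ ^ 2)) ξ‖ = 1 := by
  simp_rw [norm_fourier_cexp_neg_mul_sq_norm hb]
  rw [integral_const_mul, GaussianFourier.integral_rexp_neg_mul_sq_norm (by positivity),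
    ← mul_rpow (by positivity) (by positivity), show π / b * (π / (π ^ 2 / b)) = 1 by field_simp,
    one_rpow]

lemma norm_convolution_le_mul_integral_norm {u v : V → ℂ} (hu : Integrable u) {M : ℝ}
    (hv : ∀ᵐ x, ‖v x‖ ≤ M) (x : V) :
    ‖(u ⋆[ContinuousLinearMap.mul ℂ ℂ] v) x‖ ≤ M * ∫ t, ‖u t‖ := by
  have hv' : ∀ᵐ t, ‖v (x - t)‖ ≤ M :=
    (quasiMeasurePreserving_sub_left_of_right_invariant volume x).tendsto_ae.eventually hv
  rw [convolution_def, ← integral_const_mul]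
  refine (norm_integral_le_integral_norm _).trans (integral_mono_of_nonneg
    (.of_forall fun t ↦ norm_nonneg _) (hu.norm.const_mul M) ?_)
  filter_upwards [hv'] with t ht
  rw [ContinuousLinearMap.mul_apply', norm_mul, mul_comm M]
  exact mul_le_mul_of_nonneg_left ht (norm_nonneg _)

lemma integral_rexp_mul_norm_fourier_sq_le {u : V → ℂ} (hu : Integrable u) {M : ℝ}
    (hM : ∀ᵐ x, ‖u x‖ ≤ M) {b : ℝ} (hb : 0 < b) :
    ∫ ξ, rexp (-b * ‖ξ‖ ^ 2) * ‖𝓕 u ξ‖ ^ 2 ≤ M * ∫ x, ‖u x‖ := by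
  set ū : V → ℂ := fun x ↦ conj (u (-x))
  have hū : Integrable ū := conjCLE.toContinuousLinearMap.integrable_comp hu.comp_neg
  have hMū : ∀ᵐ x, ‖ū x‖ ≤ M := by
    filter_upwards [(quasiMeasurePreserving_neg volume).tendsto_ae.eventually hM] with x hx
    simpa [ū] using hx
  set h := u ⋆[ContinuousLinearMap.mul ℂ ℂ] ū
  have hFh : ∀ ξ, 𝓕 h ξ = ((‖𝓕 u ξ‖ ^ 2 : ℝ) : ℂ) := fun ξ ↦ by
    rw [Real.fourier_mul_convolution_eq hu hū, fourier_conj_comp_neg, mul_conj,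
      normSq_eq_norm_sq]
  have hh : ∀ x, ‖h x‖ ≤ M * ∫ x, ‖u x‖ := norm_convolution_le_mul_integral_norm hu hMū
  set K := 𝓕 (fun v : V ↦ cexp (-b * ‖v‖ ^ 2))
  calc ∫ ξ, rexp (-b * ‖ξ‖ ^ 2) * ‖𝓕 u ξ‖ ^ 2
      = (∫ ξ, cexp (-b * ‖ξ‖ ^ 2) * 𝓕 h ξ).re := by
        have hreal : ∀ ξ : V, cexp (-b * ‖ξ‖ ^ 2) * 𝓕 h ξ
            = ((rexp (-b * ‖ξ‖ ^ 2) * ‖𝓕 u ξ‖ ^ 2 : ℝ) : ℂ) := fun ξ ↦ by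
          rw [hFh]; push_cast; rfl
        simp_rw [hreal, integral_complex_ofReal, ofReal_re]
    _ = (∫ ξ, K ξ * h ξ).re := by
        rw [integral_fourier_mul_eq_of_integrable
          (integrable_cexp_neg_mul_sq_norm (by simpa using hb)) (hu.integrable_convolution _ hū)]
    _ ≤ ∫ ξ, ‖K ξ‖ * (M * ∫ x, ‖u x‖) := by
        refine (re_le_norm _).trans ((norm_integral_le_integral_norm _).trans ?_)
        refine integral_mono_of_nonneg (.of_forall fun _ ↦ norm_nonneg _)
          ((integrable_norm_fourier_cexp_neg_mul_sq_norm hb).mul_const _)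
          (.of_forall fun ξ ↦ ?_)
        simpa only [norm_mul] using mul_le_mul_of_nonneg_left (hh ξ) (norm_nonneg (K ξ))
    _ = M * ∫ x, ‖u x‖ := by
        rw [integral_mul_const, integral_norm_fourier_cexp_neg_mul_sq_norm hb, one_mul]

lemma integrable_norm_fourier_sq {u : V → ℂ} (hu : Integrable u) {M : ℝ}
    (hM : ∀ᵐ x, ‖u x‖ ≤ M) :
    Integrable (fun ξ ↦ ‖𝓕 u ξ‖ ^ 2) := by
  have hmeas : AEStronglyMeasurable (fun ξ ↦ ‖𝓕 u ξ‖ ^ 2) :=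
    (hu.continuous_fourier.norm.pow 2).aestronglyMeasurable
  refine integrable_of_integral_rexp_sq_mul_le (C := M * ∫ x, ‖u x‖) hmeas
    (.of_forall fun _ ↦ by positivity) ?_
  filter_upwards [Ioi_mem_atTop 0] with c (hc : 0 < c)
  refine ⟨(integrable_rexp_neg_mul_sq_norm (inv_pos.2 hc)).mul_bdd (c := (∫ x, ‖u x‖) ^ 2)
    hmeas (.of_forall fun ξ ↦ ?_), integral_rexp_mul_norm_fourier_sq_le hu hM (inv_pos.2 hc)⟩
  rw [norm_pow, norm_norm]
  exact pow_le_pow_left₀ (norm_nonneg _) (norm_fourier_le_integral_norm u ξ) 2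

lemma tendsto_integral_rexp_sq_mul_fourierInv {u : V → ℂ} (hu : Integrable u)
    (hu0 : ContinuousAt u 0) :
    Tendsto (fun c : ℝ ↦ ∫ v, (rexp (-c⁻¹ * ‖v‖ ^ 2) : ℂ) * 𝓕⁻ u v) atTop (𝓝 (u 0)) := by
  have := Real.tendsto_integral_gaussian_smul' hu.comp_neg
    (hu0.comp_of_eq continuous_neg.continuousAt neg_zero)
  rw [neg_zero] at this
  refine this.congr' ?_
  filter_upwards [Ioi_mem_atTop 0] with c (hc : 0 < c)
  have hb : 0 < ((c : ℂ)⁻¹).re := by simpa using hc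
  rw [Real.fourierInv_eq_fourier_comp_neg]
  push_cast
  rw [← integral_fourier_mul_eq_of_integrable (integrable_cexp_neg_mul_sq_norm hb) hu.comp_neg]
  congr with w
  rw [fourier_gaussian_innerProductSpace hb, zero_sub, norm_neg, smul_eq_mul]
  congr 3 <;> field_simp

lemma integrable_rexp_sq_mul_fourierInv {g : V → ℂ} (hg : Integrable g) {c : ℝ} (hc : 0 < c) :
    Integrable (fun v ↦ (rexp (-c⁻¹ * ‖v‖ ^ 2) : ℂ) * 𝓕⁻ g v) :=
  (integrable_rexp_neg_mul_sq_norm (inv_pos.2 hc)).ofReal.mul_bdd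
    hg.continuous_fourierInv.aestronglyMeasurable
    (.of_forall (norm_fourierInv_le_integral_norm g))

lemma integrable_rexp_sq_mul_re_fourierInv {g : V → ℂ} (hg : Integrable g) {c : ℝ}
    (hc : 0 < c) : Integrable (fun v ↦ rexp (-c⁻¹ * ‖v‖ ^ 2) * (𝓕⁻ g v).re) := by
  simpa only [RCLike.re_to_complex, re_ofReal_mul] using
    (integrable_rexp_sq_mul_fourierInv hg hc).re

lemma tendsto_integral_rexp_sq_mul_add_re_fourierInv {u : V → ℝ} (hu : Integrable u)
    {g : V → ℂ} (hg : Integrable g) (hg0 : ContinuousAt g 0) :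
    Tendsto (fun c : ℝ ↦ ∫ v, rexp (-c⁻¹ * ‖v‖ ^ 2) * (u v + (𝓕⁻ g v).re)) atTop
      (𝓝 ((∫ v, u v) + (g 0).re)) := by
  refine ((tendsto_integral_rexp_sq_mul hu).add ((continuous_re.tendsto _).comp
    (tendsto_integral_rexp_sq_mul_fourierInv hg hg0))).congr' ?_
  filter_upwards [Ioi_mem_atTop 0] with c (hc : 0 < c)
  have hre : ∫ v, rexp (-c⁻¹ * ‖v‖ ^ 2) * (𝓕⁻ g v).re
      = (∫ v, (rexp (-c⁻¹ * ‖v‖ ^ 2) : ℂ) * 𝓕⁻ g v).re := by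
    simpa only [RCLike.re_to_complex, re_ofReal_mul] using
      integral_re (integrable_rexp_sq_mul_fourierInv hg hc)
  simp only [Function.comp_apply, mul_add]
  rw [integral_add (integrable_rexp_sq_mul hu hc.le) (integrable_rexp_sq_mul_re_fourierInv hg hc),
    hre]

lemma integrable_and_integral_add_re_fourierInv_of_nonneg {u : V → ℝ} (hu : Integrable u)
    {g : V → ℂ} (hg : Integrable g) (hg0 : ContinuousAt g 0)
    (hpos : ∀ᵐ v, 0 ≤ u v + (𝓕⁻ g v).re) :
    Integrable (fun v ↦ u v + (𝓕⁻ g v).re) ∧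
      ∫ v, u v + (𝓕⁻ g v).re = (∫ v, u v) + (g 0).re :=
  integrable_and_integral_eq_of_tendsto_integral_rexp_sq_mul (φ := fun v ↦ u v + (𝓕⁻ g v).re)
    (hu.1.add (continuous_re.comp hg.continuous_fourierInv).aestronglyMeasurable) hpos
    ((eventually_gt_atTop 0).mono fun c hc ↦ by
      simpa only [mul_add, Pi.add_def] using
        (integrable_rexp_sq_mul hu hc.le).add (integrable_rexp_sq_mul_re_fourierInv hg hc))
    (tendsto_integral_rexp_sq_mul_add_re_fourierInv hu hg hg0)

/-- With `f ∈ L¹ ∩ L∞` nonnegative, `w > 0`, `w·∫f < 1` and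
`G = w²f + 𝓕⁻¹[w³(𝓕f)²/(1−w𝓕f)]`: if `G ≥ 0` a.e., then `G` is integrable and
`∫ G = w²·(∫f)/(1 − w·∫f)`. -/
theorem stmt3 (f : EuclideanSpace ℝ (Fin 3) → ℝ)
    (hf_int : Integrable f) (hf_bdd : ∃ M, ∀ x, f x ≤ M)
    (hf_nonneg : ∀ x, 0 ≤ f x)
    (w : ℝ) (hw : 0 < w) (hwf : w * ∫ x, f x < 1)
    (G : EuclideanSpace ℝ (Fin 3) → ℝ)
    (hG : G = fun R => w ^ 2 * f R + (𝓕⁻ (fun ξ : EuclideanSpace ℝ (Fin 3) =>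
      ((w : ℂ) ^ 3 * (𝓕 (fun x => (f x : ℂ)) ξ) ^ 2 /
        (1 - (w : ℂ) * 𝓕 (fun x => (f x : ℂ)) ξ) : ℂ)) R).re)
    (hGpos : ∀ᵐ R, 0 ≤ G R) :
    Integrable G ∧ (∫ R, G R) = w ^ 2 * (∫ R, f R) / (1 - w * ∫ R, f R) := by
  obtain ⟨M, hM⟩ := hf_bdd
  have hfc : Integrable (fun x ↦ (f x : ℂ)) := hf_int.ofReal
  set z := 𝓕 (fun x ↦ (f x : ℂ))
  have hwz : ∀ ξ, ‖(w : ℂ) * z ξ‖ ≤ w * ∫ x, f x := fun ξ ↦ by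
    rw [norm_mul, norm_real, Real.norm_of_nonneg hw.le]
    exact mul_le_mul_of_nonneg_left (norm_fourier_ofReal_le_integral (.of_forall hf_nonneg) ξ)
      hw.le
  set g := fun ξ ↦ (w : ℂ) ^ 3 * z ξ ^ 2 / (1 - w * z ξ)
  have hg_int : Integrable g := by
    simpa only [g, mul_div_assoc] using (integrable_sq_div_one_sub
      hfc.continuous_fourier.aestronglyMeasurable (integrable_norm_fourier_sq hfc (M := M)
        (.of_forall fun x ↦ by simpa [abs_of_nonneg (hf_nonneg x)] using hM x)) hwf hwz).const_mul
      ((w : ℂ) ^ 3)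
  have hg_cont : Continuous g := by
    simpa only [g, mul_div_assoc] using
      (continuous_sq_div_one_sub hfc.continuous_fourier hwf hwz).const_mul ((w : ℂ) ^ 3)
  have hg0 : g 0 = ((w ^ 3 * (∫ x, f x) ^ 2 / (1 - w * ∫ x, f x) : ℝ) : ℂ) := by
    simp [g, z, fourier_ofReal_zero]
  subst hG
  obtain ⟨hGint, hGeq⟩ := integrable_and_integral_add_re_fourierInv_of_nonneg
    (hf_int.const_mul (w ^ 2)) hg_int hg_cont.continuousAt hGpos
  refine ⟨hGint, ?_⟩
  have : 1 - w * ∫ x, f x ≠ 0 := by linarith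
  rw [hGeq, integral_const_mul, hg0, ofReal_re]
  field_simp
  ring
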